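/- arXiv:2411.02760 — 9 statements merged into one kernel-verified Lean document; each statement's English description precedes it below -/
import Mathlib

section
/- Let Δ and Λ be distance value sets with inf Δ = 0 and inf Λ = 0. Then the following are equivalent: (1) Δ and Λ are equivalent; (2) there exists a positive real number α such that Λ = α·Δ = {α·x : x ∈ Δ}. Moreover, if Δ and Λ are equivalent, then every witness f of their equivalence has the form f(x) = α·x for a single positive real number α. -/
/-- A distance value set: a set of positive reals closed under
`(x, y) ↦ min (x + y) (sup Δ)` (which is just `x + y` when `Δ` is unbounded). -/
def IsDVS (Δ : Set ℝ) : Prop :=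
  (∀ x ∈ Δ, 0 < x) ∧
  ∀ x ∈ Δ, ∀ y ∈ Δ,
    (BddAbove Δ → min (x + y) (sSup Δ) ∈ Δ) ∧ (¬ BddAbove Δ → x + y ∈ Δ)

/-- `(x, y, z)` is a `Δ`-triangle. -/
def IsTriangle (Δ : Set ℝ) (x y z : ℝ) : Prop :=
  x ∈ Δ ∧ y ∈ Δ ∧ z ∈ Δ ∧ |x - y| ≤ z ∧ z ≤ x + y

/-- `f` witnesses the equivalence of the distance value sets `Δ` and `Λ`:
it is a bijection of `Δ` onto `Λ` preserving triangles in both directions. -/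
def IsEquivWitness (Δ Λ : Set ℝ) (f : ℝ → ℝ) : Prop :=
  Set.BijOn f Δ Λ ∧
  ∀ x ∈ Δ, ∀ y ∈ Δ, ∀ z ∈ Δ,
    (IsTriangle Δ x y z ↔ IsTriangle Λ (f x) (f y) (f z))

/-- Equivalence of distance value sets. -/
def DVSEquiv (Δ Λ : Set ℝ) : Prop := ∃ f : ℝ → ℝ, IsEquivWitness Δ Λ f

/-!
A witness `f` is strictly monotone: for `x < y` pick `c ∈ Δ` with `x ≤ 2c < y`, so that
`(c, c, x)` is a triangle and `(c, c, y)` is not. Hence `z ≤ x + y` implies `f z ≤ f x + f y`,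
and iterating along the truncated multiples `min (n ε) (sup Δ) ∈ Δ` gives
`z ≤ n ε → f z ≤ n f(ε)`; the same bound for the inverse witness gives
`n ε < y → n f(ε) < f y`. Sandwiching `x` and `y` between consecutive multiples of a small
`ε ∈ Δ` yields `f x * (y - ε) ≤ f y * (x + ε)`, and letting `ε → 0` shows that `f x / x` is
constant.
-/

open Classical in
/-- `min a (sup Δ)`, read as `a` when `Δ` is unbounded (where `sSup Δ` is the junk value `0`). -/
noncomputable def capSup (Δ : Set ℝ) (a : ℝ) : ℝ :=
  if BddAbove Δ then min a (sSup Δ) else a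

section capSup

variable {Δ : Set ℝ}

lemma capSup_le_self (a : ℝ) : capSup Δ a ≤ a := by
  unfold capSup
  split_ifs
  exacts [min_le_left _ _, le_rfl]

lemma le_capSup {a b y : ℝ} (hy : y ∈ Δ) (hab : a ≤ b) (hay : a ≤ y) : a ≤ capSup Δ b := by
  unfold capSup
  split_ifs with hbdd
  exacts [le_min hab (hay.trans (le_csSup hbdd hy)), hab]

lemma capSup_eq_self {x : ℝ} (hx : x ∈ Δ) : capSup Δ x = x :=
  le_antisymm (capSup_le_self x) (le_capSup hx le_rfl le_rfl)

lemma capSup_capSup_add {b : ℝ} (a : ℝ) (hb : 0 ≤ b) :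
    capSup Δ (capSup Δ a + b) = capSup Δ (a + b) := by
  unfold capSup
  split_ifs
  · rw [← min_add_add_right, min_assoc, min_eq_right (le_add_of_nonneg_right hb)]
  · rfl

lemma IsDVS.capSup_add_mem (hΔ : IsDVS Δ) {x y : ℝ} (hx : x ∈ Δ) (hy : y ∈ Δ) :
    capSup Δ (x + y) ∈ Δ := by
  unfold capSup
  split_ifs with hbdd
  exacts [(hΔ.2 x hx y hy).1 hbdd, (hΔ.2 x hx y hy).2 hbdd]

lemma IsDVS.capSup_natCast_succ_mul_mem (hΔ : IsDVS Δ) {ε : ℝ} (hε : ε ∈ Δ) (n : ℕ) :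
    capSup Δ ((n + 1) * ε) ∈ Δ := by
  induction n with
  | zero => simpa [capSup_eq_self hε] using hε
  | succ n ih =>
    rw [show ((↑(n + 1) : ℝ) + 1) * ε = (n + 1) * ε + ε by push_cast; ring,
      ← capSup_capSup_add _ (hΔ.1 ε hε).le]
    exact hΔ.capSup_add_mem ih hε

lemma IsDVS.exists_mem_Ico (hΔ : IsDVS Δ) (hΔ0 : sInf Δ = 0) {a b y : ℝ} (ha : 0 ≤ a)
    (hab : a < b) (hy : y ∈ Δ) (hby : b ≤ y) : ∃ c ∈ Δ, a ≤ c ∧ c < b := by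
  obtain ⟨ε, hε, hεlt⟩ := exists_lt_of_csInf_lt ⟨y, hy⟩ (hΔ0 ▸ sub_pos.2 hab)
  have hε0 := hΔ.1 ε hε
  set n := ⌊a / ε⌋₊
  have hlt : a < (n + 1) * ε := (div_lt_iff₀ hε0).1 (Nat.lt_floor_add_one _)
  have hle : (n : ℝ) * ε ≤ a := (le_div_iff₀ hε0).1 (Nat.floor_le (div_nonneg ha hε0.le))
  refine ⟨capSup Δ ((n + 1) * ε), hΔ.capSup_natCast_succ_mul_mem hε n,
    le_capSup hy hlt.le (hab.le.trans hby), ?_⟩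
  linarith [capSup_le_self (Δ := Δ) ((n + 1) * ε)]

end capSup

lemma exists_nat_mul_lt_le {ε y : ℝ} (hε : 0 < ε) (hy : 0 < y) :
    ∃ k : ℕ, k * ε < y ∧ y ≤ (k + 1) * ε := by
  have hpos : 0 < ⌈y / ε⌉₊ := Nat.ceil_pos.2 (div_pos hy hε)
  refine ⟨⌈y / ε⌉₊ - 1, ?_, ?_⟩
  · rw [Nat.cast_pred hpos, ← lt_div_iff₀ hε]
    linarith [Nat.ceil_lt_add_one (div_pos hy hε).le]
  · rw [Nat.cast_pred hpos, sub_add_cancel, ← div_le_iff₀ hε]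
    exact Nat.le_ceil _

lemma isEquivWitness_mul_left {α : ℝ} (hα : 0 < α) (Δ : Set ℝ) :
    IsEquivWitness Δ ((α * ·) '' Δ) (α * ·) := by
  refine ⟨(mul_right_injective₀ hα.ne').injOn.bijOn_image, fun x hx y hy z hz => ?_⟩
  simp only [IsTriangle, Set.mem_image_of_mem _ hx, Set.mem_image_of_mem _ hy,
    Set.mem_image_of_mem _ hz, hx, hy, hz, ← mul_sub, ← mul_add, abs_mul, abs_of_pos hα,
    mul_le_mul_iff_right₀ hα]

namespace IsEquivWitness

variable {Δ Λ : Set ℝ} {f : ℝ → ℝ}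

lemma invFunOn (hf : IsEquivWitness Δ Λ f) : IsEquivWitness Λ Δ (Function.invFunOn f Δ) := by
  have hinv := hf.1.invOn_invFunOn
  have hbij := Set.BijOn.symm hinv.symm hf.1
  refine ⟨hbij, fun u hu v hv w hw => ?_⟩
  have := hf.2 _ (hbij.mapsTo hu) _ (hbij.mapsTo hv) _ (hbij.mapsTo hw)
  rwa [hinv.2 hu, hinv.2 hv, hinv.2 hw, Iff.comm] at this

lemma strictMonoOn (hf : IsEquivWitness Δ Λ f) (hΔ : IsDVS Δ) (hΔ0 : sInf Δ = 0)
    (hΛ : ∀ u ∈ Λ, 0 ≤ u) : StrictMonoOn f Δ := by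
  intro x hx y hy hxy
  have hx0 := hΔ.1 x hx
  obtain ⟨c, hc, hxc, hcy⟩ :=
    hΔ.exists_mem_Ico hΔ0 (half_pos hx0).le (by linarith : x / 2 < y / 2) hy
      (by linarith : y / 2 ≤ y)
  have hfx : f x ≤ f c + f c :=
    ((hf.2 c hc c hc x hx).1 ⟨hc, hc, hx, by simpa using hx0.le, by linarith⟩).2.2.2.2
  have hfy : f c + f c < f y := by
    by_contra! hle
    have hmem := hf.1.mapsTo
    have := (hf.2 c hc c hc y hy).2
      ⟨hmem hc, hmem hc, hmem hy, by simpa using hΛ _ (hmem hy), hle⟩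
    linarith [this.2.2.2.2]
  linarith

lemma monotoneOn_invFunOn (hf : IsEquivWitness Δ Λ f) (hmono : StrictMonoOn f Δ) :
    MonotoneOn (Function.invFunOn f Δ) Λ := by
  have hinv := hf.1.invOn_invFunOn
  intro u hu v hv huv
  rwa [← hmono.le_iff_le (hf.invFunOn.1.mapsTo hu) (hf.invFunOn.1.mapsTo hv), hinv.2 hu,
    hinv.2 hv]

lemma le_add (hf : IsEquivWitness Δ Λ f) (hmono : MonotoneOn f Δ) (hΛ : ∀ u ∈ Λ, 0 ≤ u)
    {x y z : ℝ} (hx : x ∈ Δ) (hy : y ∈ Δ) (hz : z ∈ Δ) (hzxy : z ≤ x + y) : f z ≤ f x + f y := by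
  by_cases htri : |x - y| ≤ z
  · exact ((hf.2 x hx y hy z hz).1 ⟨hx, hy, hz, htri, hzxy⟩).2.2.2.2
  have hfx := hΛ _ (hf.1.mapsTo hx)
  have hfy := hΛ _ (hf.1.mapsTo hy)
  rcases le_total y x with hyx | hxy
  · have : z ≤ x := by rw [abs_of_nonneg (sub_nonneg.2 hyx)] at htri; linarith
    linarith [hmono hz hx this]
  · have : z ≤ y := by rw [abs_of_nonpos (sub_nonpos.2 hxy)] at htri; linarith
    linarith [hmono hz hy this]

lemma le_natCast_mul (hf : IsEquivWitness Δ Λ f) (hmono : MonotoneOn f Δ) (hΔ : IsDVS Δ)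
    (hΛ : ∀ u ∈ Λ, 0 ≤ u) {ε z : ℝ} (hε : ε ∈ Δ) (hz : z ∈ Δ) {n : ℕ} (hzn : z ≤ n * ε) :
    f z ≤ n * f ε := by
  have hcap (k : ℕ) : f (capSup Δ ((k + 1) * ε)) ≤ (k + 1) * f ε := by
    induction k with
    | zero => simp [capSup_eq_self hε]
    | succ k ih =>
      have hle : capSup Δ ((↑(k + 1) + 1) * ε) ≤ capSup Δ ((k + 1) * ε) + ε := by
        rw [show ((↑(k + 1) : ℝ) + 1) * ε = (k + 1) * ε + ε by push_cast; ring,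
          ← capSup_capSup_add _ (hΔ.1 ε hε).le]
        exact capSup_le_self _
      have := hf.le_add hmono hΛ (hΔ.capSup_natCast_succ_mul_mem hε k) hε
        (hΔ.capSup_natCast_succ_mul_mem hε (k + 1)) hle
      push_cast at this ⊢
      linarith
  cases n with
  | zero => linarith [hΔ.1 z hz, show z ≤ 0 by simpa using hzn]
  | succ k =>
    push_cast at hzn ⊢
    exact (hmono hz (hΔ.capSup_natCast_succ_mul_mem hε k) (le_capSup hz hzn le_rfl)).trans
      (hcap k)

lemma natCast_mul_lt (hf : IsEquivWitness Δ Λ f) (hΔ : IsDVS Δ) (hΔ0 : sInf Δ = 0)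
    (hΛ : IsDVS Λ) {ε y : ℝ} (hε : ε ∈ Δ) (hy : y ∈ Δ) {n : ℕ} (hny : n * ε < y) :
    n * f ε < f y := by
  have hinv := hf.1.invOn_invFunOn
  have hmono := hf.monotoneOn_invFunOn (hf.strictMonoOn hΔ hΔ0 fun u hu => (hΛ.1 u hu).le)
  by_contra! hle
  have := hf.invFunOn.le_natCast_mul hmono hΛ (fun x hx => (hΔ.1 x hx).le) (hf.1.mapsTo hε)
    (hf.1.mapsTo hy) hle
  rw [hinv.1 hε, hinv.1 hy] at this
  linarith

lemma mul_sub_le_mul_add (hf : IsEquivWitness Δ Λ f) (hΔ : IsDVS Δ) (hΔ0 : sInf Δ = 0)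
    (hΛ : IsDVS Λ) {x y ε : ℝ} (hx : x ∈ Δ) (hy : y ∈ Δ) (hε : ε ∈ Δ) :
    f x * (y - ε) ≤ f y * (x + ε) := by
  have hε0 := hΔ.1 ε hε
  have hfx0 := hΛ.1 _ (hf.1.mapsTo hx)
  have hfy0 := hΛ.1 _ (hf.1.mapsTo hy)
  have hmono := (hf.strictMonoOn hΔ hΔ0 fun u hu => (hΛ.1 u hu).le).monotoneOn
  obtain ⟨j, hjx, hxj⟩ := exists_nat_mul_lt_le hε0 (hΔ.1 x hx)
  obtain ⟨k, hky, hyk⟩ := exists_nat_mul_lt_le hε0 (hΔ.1 y hy)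
  have hfx : f x ≤ (j + 1) * f ε := by
    exact_mod_cast hf.le_natCast_mul hmono hΔ (fun u hu => (hΛ.1 u hu).le) hε hx (n := j + 1)
      (by push_cast; exact hxj)
  have hfy : k * f ε < f y := hf.natCast_mul_lt hΔ hΔ0 hΛ hε hy hky
  have hk : (0 : ℝ) ≤ k := k.cast_nonneg
  have hratio : f x * k ≤ f y * (j + 1) := by nlinarith
  nlinarith

lemma mul_eq_mul (hf : IsEquivWitness Δ Λ f) (hΔ : IsDVS Δ) (hΔ0 : sInf Δ = 0)
    (hΛ : IsDVS Λ) {x y : ℝ} (hx : x ∈ Δ) (hy : y ∈ Δ) : f x * y = f y * x := by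
  suffices key : ∀ x ∈ Δ, ∀ y ∈ Δ, f x * y ≤ f y * x from
    le_antisymm (key x hx y hy) (key y hy x hx)
  intro x hx y hy
  have hsum : 0 < f x + f y := add_pos (hΛ.1 _ (hf.1.mapsTo hx)) (hΛ.1 _ (hf.1.mapsTo hy))
  refine le_of_forall_pos_le_add fun η hη => ?_
  obtain ⟨ε, hε, hεη⟩ := exists_lt_of_csInf_lt ⟨x, hx⟩ (hΔ0 ▸ div_pos hη hsum)
  have := hf.mul_sub_le_mul_add hΔ hΔ0 hΛ hx hy hε
  have := (lt_div_iff₀ hsum).1 hεη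
  nlinarith

lemma exists_eq_mul (hf : IsEquivWitness Δ Λ f) (hΔ : IsDVS Δ) (hΔ0 : sInf Δ = 0)
    (hΛ : IsDVS Λ) : ∃ α : ℝ, 0 < α ∧ ∀ x ∈ Δ, f x = α * x := by
  rcases Δ.eq_empty_or_nonempty with rfl | ⟨x₀, hx₀⟩
  · exact ⟨1, one_pos, by simp⟩
  have hx₀0 := hΔ.1 x₀ hx₀
  refine ⟨f x₀ / x₀, div_pos (hΛ.1 _ (hf.1.mapsTo hx₀)) hx₀0, fun x hx => ?_⟩
  rw [div_mul_eq_mul_div, eq_div_iff hx₀0.ne', hf.mul_eq_mul hΔ hΔ0 hΛ hx hx₀]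

end IsEquivWitness

theorem dvs_equiv_iff_scalar_multiple_general (Δ Λ : Set ℝ) (hΔ : IsDVS Δ) (hΛ : IsDVS Λ)
    (hΔ0 : sInf Δ = 0) :
    (DVSEquiv Δ Λ ↔ ∃ α : ℝ, 0 < α ∧ Λ = (fun x => α * x) '' Δ) ∧
    (∀ f : ℝ → ℝ, IsEquivWitness Δ Λ f →
      ∃ α : ℝ, 0 < α ∧ ∀ x ∈ Δ, f x = α * x) := by
  have linear (f : ℝ → ℝ) (hf : IsEquivWitness Δ Λ f) : ∃ α : ℝ, 0 < α ∧ ∀ x ∈ Δ, f x = α * x :=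
    hf.exists_eq_mul hΔ hΔ0 hΛ
  refine ⟨⟨fun ⟨f, hf⟩ => ?_, fun ⟨α, hα, hΛα⟩ => ⟨_, hΛα ▸ isEquivWitness_mul_left hα Δ⟩⟩,
    linear⟩
  obtain ⟨α, hα, hfα⟩ := linear f hf
  exact ⟨α, hα, hf.1.image_eq.symm.trans (Set.image_congr hfα)⟩

/-- Two distance value sets with infimum `0` are equivalent iff one is a positive
multiple of the other; moreover every witness of the equivalence is multiplication
by a single positive real number. -/
theorem dvs_equiv_iff_scalar_multiple (Δ Λ : Set ℝ) (hΔ : IsDVS Δ) (hΛ : IsDVS Λ)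
    (hΔ0 : sInf Δ = 0) (hΛ0 : sInf Λ = 0) :
    (DVSEquiv Δ Λ ↔ ∃ α : ℝ, 0 < α ∧ Λ = (fun x => α * x) '' Δ) ∧
    (∀ f : ℝ → ℝ, IsEquivWitness Δ Λ f →
      ∃ α : ℝ, 0 < α ∧ ∀ x ∈ Δ, f x = α * x) :=
  dvs_equiv_iff_scalar_multiple_general Δ Λ hΔ hΛ hΔ0
end

section
/- Let α and β be positive irrational numbers. Then Δ_α and Δ_β are equivalent distance value sets if and only if α and β are E^{IR}_{GL₂(ℚ)}-equivalent, i.e., if and only if there exist rationals a, b, c, d with ad − bc ≠ 0 such that β = (aα + b)/(cα + d). -/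
/-- `Δ_α = {pα + q : p, q ∈ ℚ} ∩ (0, +∞)`. -/
def Dset (α : ℝ) : Set ℝ := {x | (∃ p q : ℚ, x = (p : ℝ) * α + (q : ℝ)) ∧ 0 < x}

/-- `α` and `β` are `E^{IR}_{GL₂(ℚ)}`-equivalent: `β` is the image of `α` under a
linear fractional transformation with invertible rational coefficient matrix. -/
def EGL2Q (α β : ℝ) : Prop :=
  ∃ a b c d : ℚ, a * d - b * c ≠ 0 ∧ β = ((a : ℝ) * α + b) / ((c : ℝ) * α + d)

/-!
A triangle-preserving bijection `f : Δ_α → Δ_β` is monotone, because `z ≤ 2x` is the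
triangle condition for `(x, x, z)` and `Δ_β` contains a rational in every interval of positive
reals. The same density turns the triangle `(x, y, x + y)` into additivity of `f`, and a
monotone additive map on `Δ_α` is multiplication by `f 1`. Writing `f 1 = cβ + d` and
`f α = α f 1 = aβ + b` and solving for `β` gives the fractional linear transformation.
Conversely, if `β (cα + d) = aα + b` with `cα + d > 0`, then `x ↦ x / (cα + d)` maps `Δ_α`
onto `Δ_β`, and scaling by a positive constant preserves triangles.
-/

theorem Irrational.ratCast_mul_add_eq_zero {α : ℝ} (hα : Irrational α) {c d : ℚ}
    (h : (c : ℝ) * α + d = 0) : c = 0 ∧ d = 0 := by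
  by_cases hc : c = 0
  · subst hc
    simpa using h
  · exact absurd h ((hα.ratCast_mul hc).add_ratCast d).ne_zero

theorem exists_nat_div_mem_Ioo {a b : ℝ} (ha : 0 < a) (hab : a < b) :
    ∃ m n : ℕ, 0 < m ∧ 0 < n ∧ a < m / n ∧ (m : ℝ) / n < b := by
  obtain ⟨q, haq, hqb⟩ := exists_rat_btwn hab
  have hq : 0 < q := by exact_mod_cast ha.trans haq
  have hnum : ((q.num.toNat : ℕ) : ℝ) = q.num := by
    exact_mod_cast Int.toNat_of_nonneg (Rat.num_pos.2 hq).le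
  refine ⟨q.num.toNat, q.den, by have := Rat.num_pos.2 hq; omega, q.den_pos, ?_⟩
  rw [hnum, ← Rat.cast_def]
  exact ⟨haq, hqb⟩

section Witness

variable {Δ Λ : Set ℝ} {f : ℝ → ℝ}

theorem IsEquivWitness.monotoneOn (hf : IsEquivWitness Δ Λ f) (hΛ : ∀ y ∈ Λ, 0 < y)
    (hΛℚ : ∀ q : ℚ, 0 < q → (q : ℝ) ∈ Λ) : MonotoneOn f Δ := by
  intro x hx y hy hxy
  by_contra! hlt
  obtain ⟨q, hyq, hqx⟩ := exists_rat_btwn (by linarith : 2 * f y < 2 * f x)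
  have hq : (0 : ℝ) < q := by linarith [hΛ _ (hf.1.mapsTo hy)]
  obtain ⟨z, hz, hfz⟩ := hf.1.surjOn (hΛℚ q (by exact_mod_cast hq))
  have hxxz : IsTriangle Δ x x z := (hf.2 x hx x hx z hz).2
    ⟨hf.1.mapsTo hx, hf.1.mapsTo hx, hf.1.mapsTo hz, by simp [hfz, hq.le], by linarith⟩
  have hyyz : IsTriangle Δ y y z :=
    ⟨hy, hy, hz, by simpa using hxxz.2.2.2.1, by linarith [hxxz.2.2.2.2]⟩
  linarith [((hf.2 y hy y hy z hz).1 hyyz).2.2.2.2]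

theorem IsEquivWitness.map_add (hf : IsEquivWitness Δ Λ f) (hΔ : ∀ x ∈ Δ, 0 < x)
    (hΛ : ∀ y ∈ Λ, 0 < y) (hΛℚ : ∀ q : ℚ, 0 < q → (q : ℝ) ∈ Λ) {x y : ℝ} (hx : x ∈ Δ)
    (hy : y ∈ Δ) (hxy : x + y ∈ Δ) : f (x + y) = f x + f y := by
  have hsum : IsTriangle Λ (f x) (f y) (f (x + y)) := (hf.2 x hx y hy _ hxy).1
    ⟨hx, hy, hxy, abs_sub_le_iff.2 ⟨by linarith [hΔ y hy], by linarith [hΔ x hx]⟩, le_rfl⟩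
  refine le_antisymm hsum.2.2.2.2 (not_lt.1 fun hlt => ?_)
  obtain ⟨q, hq₁, hq₂⟩ := exists_rat_btwn hlt
  have hq : (0 : ℝ) < q := (hΛ _ (hf.1.mapsTo hxy)).trans hq₁
  obtain ⟨z, hz, hfz⟩ := hf.1.surjOn (hΛℚ q (by exact_mod_cast hq))
  -- `(f x, f y, q)` is a triangle since `f (x + y) < q < f x + f y`, hence `z ≤ x + y`.
  have hxyz : IsTriangle Δ x y z := (hf.2 x hx y hy z hz).2
    ⟨hf.1.mapsTo hx, hf.1.mapsTo hy, hf.1.mapsTo hz, by linarith [hsum.2.2.2.1], by linarith⟩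
  linarith [hf.monotoneOn hΛ hΛℚ hz hxy hxyz.2.2.2.2]

theorem isEquivWitness_div_of_mem_iff {t : ℝ} (ht : 0 < t)
    (h : ∀ y, y ∈ Λ ↔ y * t ∈ Δ) : IsEquivWitness Δ Λ (· / t) := by
  have hmem : ∀ x, x / t ∈ Λ ↔ x ∈ Δ := fun x => by rw [h, div_mul_cancel₀ x ht.ne']
  refine ⟨⟨fun x hx => (hmem x).2 hx, fun x _ y _ hxy => (div_left_inj' ht.ne').1 hxy,
    fun y hy => ⟨y * t, (h y).1 hy, mul_div_cancel_right₀ y ht.ne'⟩⟩, fun x _ y _ z _ => ?_⟩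
  simp only [IsTriangle, hmem, ← sub_div, abs_div, abs_of_pos ht, ← add_div,
    div_le_div_iff_of_pos_right ht]

end Witness

section Additive

variable {Δ : Set ℝ} {f : ℝ → ℝ}

theorem natCast_mul_mem_and_map_eq (hΔ : ∀ x ∈ Δ, ∀ y ∈ Δ, x + y ∈ Δ)
    (hf : ∀ x ∈ Δ, ∀ y ∈ Δ, f (x + y) = f x + f y) {x : ℝ} (hx : x ∈ Δ) {n : ℕ} (hn : 0 < n) :
    (n : ℝ) * x ∈ Δ ∧ f (n * x) = n * f x := by
  induction n, hn using Nat.le_induction with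
  | base => simpa using hx
  | succ n _ ih =>
    have hsplit : ((n + 1 : ℕ) : ℝ) * x = n * x + x := by push_cast; ring
    rw [hsplit, hf _ ih.1 _ hx, ih.2]
    exact ⟨hΔ _ ih.1 _ hx, by push_cast; ring⟩

theorem MonotoneOn.mul_le_mul_of_map_add (hmono : MonotoneOn f Δ) (hΔ : ∀ x ∈ Δ, 0 < x)
    (hΔadd : ∀ x ∈ Δ, ∀ y ∈ Δ, x + y ∈ Δ) (hfpos : ∀ x ∈ Δ, 0 < f x)
    (hf : ∀ x ∈ Δ, ∀ y ∈ Δ, f (x + y) = f x + f y) {x y : ℝ} (hx : x ∈ Δ) (hy : y ∈ Δ) :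
    f x * y ≤ x * f y := by
  by_contra! hlt
  have hx₀ := hΔ x hx
  have hfx₀ := hfpos x hx
  have hratio : f y / f x < y / x := by rw [div_lt_div_iff₀ hfx₀ hx₀]; linarith
  obtain ⟨m, n, hm, hn, hlow, hup⟩ :=
    exists_nat_div_mem_Ioo (div_pos (hfpos y hy) hfx₀) hratio
  obtain ⟨hmx, hfmx⟩ := natCast_mul_mem_and_map_eq hΔadd hf hx hm
  obtain ⟨hny, hfny⟩ := natCast_mul_mem_and_map_eq hΔadd hf hy hn
  have hn₀ : (0 : ℝ) < n := by exact_mod_cast hn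
  have hle : (m : ℝ) * x ≤ n * y := by
    rw [div_lt_div_iff₀ hn₀ hx₀] at hup; linarith
  have hfle := hmono hmx hny hle
  rw [hfmx, hfny] at hfle
  rw [div_lt_div_iff₀ hfx₀ hn₀] at hlow
  linarith

theorem MonotoneOn.mul_eq_mul_of_map_add (hmono : MonotoneOn f Δ) (hΔ : ∀ x ∈ Δ, 0 < x)
    (hΔadd : ∀ x ∈ Δ, ∀ y ∈ Δ, x + y ∈ Δ) (hfpos : ∀ x ∈ Δ, 0 < f x)
    (hf : ∀ x ∈ Δ, ∀ y ∈ Δ, f (x + y) = f x + f y) {x y : ℝ} (hx : x ∈ Δ) (hy : y ∈ Δ) :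
    f x * y = x * f y := by
  have h₁ := hmono.mul_le_mul_of_map_add hΔ hΔadd hfpos hf hx hy
  have h₂ := hmono.mul_le_mul_of_map_add hΔ hΔadd hfpos hf hy hx
  linarith

end Additive

namespace Dset

variable {α : ℝ}

theorem ratCast_mem (α : ℝ) {q : ℚ} (hq : 0 < q) : (q : ℝ) ∈ Dset α :=
  ⟨⟨0, q, by simp⟩, by exact_mod_cast hq⟩

theorem one_mem (α : ℝ) : (1 : ℝ) ∈ Dset α := by
  simpa using ratCast_mem α one_pos

theorem self_mem (hα : 0 < α) : α ∈ Dset α :=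
  ⟨⟨1, 0, by simp⟩, hα⟩

theorem add_mem {x y : ℝ} (hx : x ∈ Dset α) (hy : y ∈ Dset α) : x + y ∈ Dset α := by
  obtain ⟨⟨p, q, rfl⟩, hx⟩ := hx
  obtain ⟨⟨p', q', rfl⟩, hy⟩ := hy
  exact ⟨⟨p + p', q + q', by push_cast; ring⟩, add_pos hx hy⟩

theorem mem_iff_mul_mem {β : ℝ} {a b c d : ℚ} (hdet : a * d - b * c ≠ 0)
    (hpos : 0 < (c : ℝ) * α + d) (hβ : β * (c * α + d) = a * α + b) {y : ℝ} :
    y ∈ Dset β ↔ y * (c * α + d) ∈ Dset α := by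
  constructor
  · rintro ⟨⟨u, v, rfl⟩, hy⟩
    exact ⟨⟨u * a + v * c, u * b + v * d, by push_cast; linear_combination u * hβ⟩,
      mul_pos hy hpos⟩
  · rintro ⟨⟨p, q, hpq⟩, hyt⟩
    have hdetR : (a : ℝ) * d - b * c ≠ 0 := by exact_mod_cast hdet
    refine ⟨⟨(p * d - q * c) / (a * d - b * c), (q * a - p * b) / (a * d - b * c), ?_⟩,
      pos_of_mul_pos_left hyt hpos.le⟩
    apply mul_right_cancel₀ hpos.ne'
    rw [hpq, add_mul, mul_assoc, hβ]
    push_cast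
    rw [div_mul_eq_mul_div, div_mul_eq_mul_div, ← add_div, eq_div_iff hdetR]
    ring

end Dset

theorem IsEquivWitness.map_eq_mul_map_one {α β : ℝ} {f : ℝ → ℝ}
    (hf : IsEquivWitness (Dset α) (Dset β) f) {x : ℝ} (hx : x ∈ Dset α) : f x = x * f 1 := by
  have hpos : ∀ y ∈ Dset β, 0 < y := fun _ hy => hy.2
  have hrat : ∀ q : ℚ, 0 < q → (q : ℝ) ∈ Dset β := fun _ => Dset.ratCast_mem β
  have hmul := (hf.monotoneOn hpos hrat).mul_eq_mul_of_map_add (fun _ hy => hy.2)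
    (fun _ hx _ hy => Dset.add_mem hx hy) (fun _ hx => (hf.1.mapsTo hx).2)
    (fun _ hx _ hy => hf.map_add (fun _ hy => hy.2) hpos hrat hx hy (Dset.add_mem hx hy))
    hx (Dset.one_mem α)
  linarith

namespace EGL2Q

variable {α β : ℝ}

theorem of_mul_eq (hα : Irrational α) {s : ℝ} (hs : s ≠ 0) {a b c d : ℚ}
    (hsβ : s = c * β + d) (hsα : s * α = a * β + b) : EGL2Q α β := by
  have hden : (c : ℝ) * α - a ≠ 0 := by
    intro h0
    obtain ⟨rfl, ha⟩ := hα.ratCast_mul_add_eq_zero (c := c) (d := -a) (by push_cast; linarith)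
    obtain rfl : a = 0 := neg_eq_zero.1 ha
    simp only [Rat.cast_zero, zero_mul, zero_add] at hsβ hsα
    refine hα.ne_rat (b / d) ?_
    rw [Rat.cast_div, eq_div_iff (hsβ ▸ hs), ← hsβ, mul_comm, hsα]
  -- `s (c α - a) = c (s α) - a s = b c - a d`
  have hdet : a * d - b * c ≠ 0 := by
    intro h0
    apply mul_ne_zero hs hden
    have h0R : ((a * d - b * c : ℚ) : ℝ) = 0 := by rw [h0, Rat.cast_zero]
    push_cast at h0R
    linear_combination (c : ℝ) * hsα - a * hsβ - h0R
  refine ⟨-d, b, c, -a, by rwa [neg_mul_neg, mul_comm d a], ?_⟩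
  push_cast
  rw [eq_div_iff (by rwa [← sub_eq_add_neg])]
  linear_combination hsα - α * hsβ

theorem of_isEquivWitness (hα : 0 < α) (hαirr : Irrational α) {f : ℝ → ℝ}
    (hf : IsEquivWitness (Dset α) (Dset β) f) : EGL2Q α β := by
  obtain ⟨⟨c, d, hcd⟩, hpos⟩ := hf.1.mapsTo (Dset.one_mem α)
  obtain ⟨⟨a, b, hab⟩, -⟩ := hf.1.mapsTo (Dset.self_mem hα)
  rw [hf.map_eq_mul_map_one (Dset.self_mem hα), mul_comm] at hab
  exact of_mul_eq hαirr hpos.ne' hcd hab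

theorem exists_mul_eq_of_pos (hα : Irrational α) (h : EGL2Q α β) :
    ∃ a b c d : ℚ, a * d - b * c ≠ 0 ∧ 0 < (c : ℝ) * α + d ∧ β * (c * α + d) = a * α + b := by
  obtain ⟨a, b, c, d, hdet, rfl⟩ := h
  have hden : (c : ℝ) * α + d ≠ 0 := fun h0 => by
    obtain ⟨rfl, rfl⟩ := hα.ratCast_mul_add_eq_zero h0
    simp at hdet
  rcases hden.lt_or_gt with hneg | hpos
  · refine ⟨-a, -b, -c, -d, by simpa using hdet, by push_cast; linarith, ?_⟩
    push_cast
    rw [show -(c : ℝ) * α + -d = -(c * α + d) by ring, mul_neg, div_mul_cancel₀ _ hden]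
    ring
  · exact ⟨a, b, c, d, hdet, hpos, div_mul_cancel₀ _ hden⟩

theorem dvsEquiv (h : EGL2Q α β) (hα : Irrational α) :
    DVSEquiv (Dset α) (Dset β) := by
  obtain ⟨a, b, c, d, hdet, hpos, hβ⟩ := h.exists_mul_eq_of_pos hα
  exact ⟨_, isEquivWitness_div_of_mem_iff hpos fun _ => Dset.mem_iff_mul_mem hdet hpos hβ⟩

end EGL2Q

theorem dset_equiv_iff_EGL2Q_general (α β : ℝ) (hα : 0 < α) (hαirr : Irrational α) :
    DVSEquiv (Dset α) (Dset β) ↔ EGL2Q α β :=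
  ⟨fun ⟨_, hf⟩ => EGL2Q.of_isEquivWitness hα hαirr hf, fun h => h.dvsEquiv hαirr⟩

/-- For positive irrationals `α, β`, the distance value sets `Δ_α` and `Δ_β` are
equivalent iff `α` and `β` are `E^{IR}_{GL₂(ℚ)}`-equivalent. -/
theorem dset_equiv_iff_EGL2Q (α β : ℝ) (hα : 0 < α) (hαirr : Irrational α)
    (hβ : 0 < β) (hβirr : Irrational β) :
    DVSEquiv (Dset α) (Dset β) ↔ EGL2Q α β :=
  dset_equiv_iff_EGL2Q_general α β hα hαirr
end

section
/- Let Δ and Λ be distance value sets and let f : Δ → Λ be a witness of their equivalence. Then for all x, y ∈ Δ with x > 2y, one has f(x) > 2·f(y). Consequently, if inf Δ = 0, then inf Λ = 0. -/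
/-!
The isosceles triple `(x, y, y)` of positive distances is a triangle exactly when `x ≤ 2 y`,
so a witness of equivalence preserves the relation `x ≤ 2 y` in both directions. A positive
set has infimum `0` exactly when each of its elements exceeds twice some other element, and
this property is therefore transported along the witness.
-/

theorem isTriangle_isosceles_iff {Δ : Set ℝ} {x y : ℝ} (hx : x ∈ Δ) (hy : y ∈ Δ)
    (hx₀ : 0 < x) : IsTriangle Δ x y y ↔ x ≤ 2 * y := by
  simp only [IsTriangle, abs_le, hx, hy, true_and]
  constructor
  · rintro ⟨⟨-, h⟩, -⟩
    linarith
  · intro h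
    exact ⟨⟨by linarith, by linarith⟩, by linarith⟩

theorem IsEquivWitness.le_two_mul_iff {Δ Λ : Set ℝ} {f : ℝ → ℝ} (hf : IsEquivWitness Δ Λ f)
    (hΔ : ∀ x ∈ Δ, 0 < x) (hΛ : ∀ x ∈ Λ, 0 < x) {x y : ℝ} (hx : x ∈ Δ) (hy : y ∈ Δ) :
    x ≤ 2 * y ↔ f x ≤ 2 * f y := by
  have hfx := hf.1.mapsTo hx
  rw [← isTriangle_isosceles_iff hx hy (hΔ x hx),
    ← isTriangle_isosceles_iff hfx (hf.1.mapsTo hy) (hΛ _ hfx)]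
  exact hf.2 x hx y hy y hy

theorem sInf_eq_zero_iff_forall_exists_two_mul_lt {S : Set ℝ} (hS : ∀ x ∈ S, 0 < x) :
    sInf S = 0 ↔ ∀ x ∈ S, ∃ y ∈ S, 2 * y < x := by
  constructor
  · intro h x hx
    obtain ⟨y, hy, hyx⟩ := exists_lt_of_csInf_lt ⟨x, hx⟩ (h.trans_lt (half_pos (hS x hx)))
    exact ⟨y, hy, by linarith⟩
  · intro h
    rcases S.eq_empty_or_nonempty with rfl | hne
    · exact Real.sInf_empty
    have hbdd : BddBelow S := ⟨0, fun x hx => (hS x hx).le⟩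
    have hnonneg : 0 ≤ sInf S := le_csInf hne fun x hx => (hS x hx).le
    by_contra hne₀
    have hpos : 0 < sInf S := lt_of_le_of_ne hnonneg (Ne.symm hne₀)
    obtain ⟨x, hx, hxlt⟩ := exists_lt_of_csInf_lt hne (by linarith : sInf S < 2 * sInf S)
    obtain ⟨y, hy, hyx⟩ := h x hx
    linarith [csInf_le hbdd hy]

/-- A witness of equivalence doubles strict "more than double" gaps; consequently
it carries distance value sets with infimum zero to ones with infimum zero. -/
theorem witness_doubling (Δ Λ : Set ℝ) (hΔ : IsDVS Δ) (hΛ : IsDVS Λ)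
    (f : ℝ → ℝ) (hf : IsEquivWitness Δ Λ f) :
    (∀ x ∈ Δ, ∀ y ∈ Δ, 2 * y < x → 2 * f y < f x) ∧
    (sInf Δ = 0 → sInf Λ = 0) := by
  have doubling : ∀ x ∈ Δ, ∀ y ∈ Δ, 2 * y < x → 2 * f y < f x := by
    intro x hx y hy
    simpa only [not_le] using (hf.le_two_mul_iff hΔ.1 hΛ.1 hx hy).not.mp
  refine ⟨doubling, fun hinf => ?_⟩
  rw [sInf_eq_zero_iff_forall_exists_two_mul_lt hΔ.1] at hinf
  rw [sInf_eq_zero_iff_forall_exists_two_mul_lt hΛ.1]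
  intro b hb
  obtain ⟨x, hx, rfl⟩ := hf.1.surjOn hb
  obtain ⟨y, hy, hyx⟩ := hinf x hx
  exact ⟨f y, hf.1.mapsTo hy, doubling x hx y hy hyx⟩
end

section
/- Let Δ and Λ be distance value sets with inf Δ = 0, and let f : Δ → Λ be a witness of their equivalence. Then f is continuous on Δ: for every x ∈ Δ and every ε > 0 there exists δ > 0 such that for all y ∈ Δ, |x − y| < δ implies |f(x) − f(y)| < ε. -/
/-!
A witness `f` preserves the non-triangles `(a, b, b)` with `2b < a`, so `2 f(b) < f(a)` whenever
`2b < a`. Since `inf Δ = 0`, below every `e ∈ Δ` one can halve `n` times inside `Δ` and reach a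
`d ≤ e` with `2ⁿ f(d) ≤ f(e)`, i.e. arbitrarily small values of `f`. If `d ≤ x` and `|x - y| < d`,
then `(x, y, d)` is a `Δ`-triangle, hence `(f x, f y, f d)` is a `Λ`-triangle and
`|f x - f y| ≤ f d`.
-/

lemma not_isTriangle_of_two_mul_lt {Δ : Set ℝ} {a b : ℝ} (h : 2 * b < a) :
    ¬ IsTriangle Δ a b b := fun ⟨_, _, _, hab, _⟩ => by
  linarith [le_abs_self (a - b)]

lemma isTriangle_of_le_two_mul {Δ : Set ℝ} {a b : ℝ} (ha : a ∈ Δ) (hb : b ∈ Δ) (ha0 : 0 ≤ a)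
    (h : a ≤ 2 * b) : IsTriangle Δ a b b :=
  ⟨ha, hb, hb, abs_sub_le_iff.mpr ⟨by linarith, by linarith⟩, by linarith⟩

namespace IsEquivWitness

variable {Δ Λ : Set ℝ} {f : ℝ → ℝ}

lemma two_mul_lt (hf : IsEquivWitness Δ Λ f) (hΛ : ∀ y ∈ Λ, 0 < y) {a b : ℝ} (ha : a ∈ Δ)
    (hb : b ∈ Δ) (h : 2 * b < a) : 2 * f b < f a := by
  have hfa : f a ∈ Λ := hf.1.mapsTo ha
  by_contra! hle
  exact not_isTriangle_of_two_mul_lt h <| (hf.2 a ha b hb b hb).mpr <|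
    isTriangle_of_le_two_mul hfa (hf.1.mapsTo hb) (hΛ _ hfa).le hle

lemma exists_le_pow_mul_le (hf : IsEquivWitness Δ Λ f) (hΔ : ∀ x ∈ Δ, 0 < x)
    (hΛ : ∀ y ∈ Λ, 0 < y) (hΔ0 : sInf Δ = 0) {e : ℝ} (he : e ∈ Δ) (n : ℕ) :
    ∃ d ∈ Δ, d ≤ e ∧ 2 ^ n * f d ≤ f e := by
  induction n with
  | zero => exact ⟨e, he, le_rfl, by simp⟩
  | succ n ih =>
    obtain ⟨d, hd, hde, hfd⟩ := ih
    obtain ⟨d', hd', hd'd⟩ : ∃ d' ∈ Δ, d' < d / 2 :=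
      exists_lt_of_csInf_lt ⟨e, he⟩ (by linarith [hΔ d hd])
    have hf2 : 2 * f d' < f d := hf.two_mul_lt hΛ hd hd' (by linarith)
    refine ⟨d', hd', by linarith [hΔ d' hd'], ?_⟩
    calc 2 ^ (n + 1) * f d' = 2 ^ n * (2 * f d') := by ring
      _ ≤ 2 ^ n * f d := by gcongr
      _ ≤ f e := hfd

lemma exists_le_lt (hf : IsEquivWitness Δ Λ f) (hΔ : ∀ x ∈ Δ, 0 < x)
    (hΛ : ∀ y ∈ Λ, 0 < y) (hΔ0 : sInf Δ = 0) {e : ℝ} (he : e ∈ Δ) {ε : ℝ} (hε : 0 < ε) :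
    ∃ d ∈ Δ, d ≤ e ∧ f d < ε := by
  obtain ⟨n, hn⟩ := pow_unbounded_of_one_lt (f e / ε) one_lt_two
  obtain ⟨d, hd, hde, hfd⟩ := hf.exists_le_pow_mul_le hΔ hΛ hΔ0 he n
  refine ⟨d, hd, hde, lt_of_mul_lt_mul_left ?_ (by positivity : (0 : ℝ) ≤ 2 ^ n)⟩
  calc 2 ^ n * f d ≤ f e := hfd
    _ < 2 ^ n * ε := by rw [div_lt_iff₀ hε] at hn; linarith

end IsEquivWitness

/-- A witness of equivalence of distance value sets, where the first has
infimum zero, is continuous on its domain. -/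
theorem witness_continuous (Δ Λ : Set ℝ) (hΔ : IsDVS Δ) (hΛ : IsDVS Λ)
    (hΔ0 : sInf Δ = 0) (f : ℝ → ℝ) (hf : IsEquivWitness Δ Λ f) :
    ∀ x ∈ Δ, ∀ ε : ℝ, 0 < ε → ∃ δ : ℝ, 0 < δ ∧
      ∀ y ∈ Δ, |x - y| < δ → |f x - f y| < ε := by
  intro x hx ε hε
  obtain ⟨d, hd, hdx, hfd⟩ := hf.exists_le_lt hΔ.1 hΛ.1 hΔ0 hx hε
  refine ⟨d, hΔ.1 d hd, fun y hy hxy => ?_⟩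
  have htri : IsTriangle Δ x y d := ⟨hx, hy, hd, hxy.le, by linarith [hΔ.1 y hy]⟩
  exact ((hf.2 x hx y hy d hd).mp htri).2.2.2.1.trans_lt hfd
end

section
/- Let Δ and Λ be distance value sets with inf Δ = 0, let f : Δ → Λ be a witness of their equivalence, and let x, y ∈ Δ. Then exactly one of the following holds for the set {z ∈ Δ : z > x + y}: either f(z) > f(x) + f(y) for every such z, or f(z) < |f(x) − f(y)| for every such z. Similarly, for the set {z ∈ Δ : z < |x − y|}: either f(z) > f(x) + f(y) for every such z, or f(z) < |f(x) − f(y)| for every such z. -/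
/-!
Outside the band `[|x - y|, x + y]` no `z ∈ Δ` forms a triangle with `x, y`, so `f z` lies outside
`[|f x - f y|, f x + f y]`: it is *above* or *below*. Pick `ε ∈ Δ` smaller than `x`, `y` and the
region considered (possible as `inf Δ = 0`). Since `(x, x, ε)` and `(y, y, ε)` are triangles,
`f ε ≤ 2 min (f x) (f y)`, so an above and a below point have images more than `f ε` apart and
therefore cannot form a triangle with `ε`: they are more than `ε` apart. Walking from one point of
the region to another in steps of `ε` (closure of `Δ` under addition keeps us in `Δ`) thus never
changes the side.
-/

theorem exists_lt_le_add_of_forall_add {α : Type*} [AddCommGroup α] [LinearOrder α]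
    [IsOrderedAddMonoid α] [Archimedean α] {P : α → Prop} {a b ε : α} (hε : 0 < ε) (ha : P a)
    (hab : a < b) (hstep : ∀ c, P c → c + ε < b → P (c + ε)) :
    ∃ c, P c ∧ c < b ∧ b ≤ c + ε := by
  by_contra! hstuck
  have hwalk : ∀ n : ℕ, P (a + n • ε) ∧ a + n • ε < b := by
    intro n
    induction n with
    | zero => simpa using ⟨ha, hab⟩
    | succ n ih =>
      have hlt := hstuck _ ih.1 ih.2
      rw [succ_nsmul, ← add_assoc]
      exact ⟨hstep _ ih.1 hlt, hlt⟩
  obtain ⟨n, hn⟩ := Archimedean.arch (b - a) hε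
  exact (hwalk n).2.not_ge (sub_le_iff_le_add'.1 hn)

theorem IsDVS.add_mem {Δ : Set ℝ} (hΔ : IsDVS Δ) {a b c : ℝ} (ha : a ∈ Δ) (hb : b ∈ Δ)
    (hc : c ∈ Δ) (hle : a + b ≤ c) : a + b ∈ Δ := by
  by_cases hbdd : BddAbove Δ
  · simpa [min_eq_left (hle.trans (le_csSup hbdd hc))] using (hΔ.2 a ha b hb).1 hbdd
  · exact (hΔ.2 a ha b hb).2 hbdd

namespace IsEquivWitness

variable {Δ Λ : Set ℝ} {f : ℝ → ℝ}

theorem triangle_iff (hf : IsEquivWitness Δ Λ f) {a b c : ℝ} (ha : a ∈ Δ) (hb : b ∈ Δ)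
    (hc : c ∈ Δ) :
    (|a - b| ≤ c ∧ c ≤ a + b) ↔ (|f a - f b| ≤ f c ∧ f c ≤ f a + f b) := by
  have h := hf.2 a ha b hb c hc
  simpa only [IsTriangle, ha, hb, hc, hf.1.mapsTo ha, hf.1.mapsTo hb, hf.1.mapsTo hc,
    true_and] using h

theorem above_or_below (hf : IsEquivWitness Δ Λ f) {x y z : ℝ} (hx : x ∈ Δ) (hy : y ∈ Δ)
    (hz : z ∈ Δ) (hnot : ¬(|x - y| ≤ z ∧ z ≤ x + y)) :
    f z < |f x - f y| ∨ f x + f y < f z := by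
  by_contra! h
  exact hnot ((hf.triangle_iff hx hy hz).2 h)

theorem map_add_abs_sub_le (hf : IsEquivWitness Δ Λ f) {x y ε : ℝ} (hx : x ∈ Δ) (hy : y ∈ Δ)
    (hε : ε ∈ Δ) (hε0 : 0 ≤ ε) (hεx : ε ≤ x) (hεy : ε ≤ y) :
    f ε + |f x - f y| ≤ f x + f y := by
  have hx' := ((hf.triangle_iff hx hx hε).1 ⟨by simpa using hε0, by linarith⟩).2
  have hy' := ((hf.triangle_iff hy hy hε).1 ⟨by simpa using hε0, by linarith⟩).2
  rw [← le_sub_iff_add_le', abs_sub_le_iff]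
  constructor <;> linarith

theorem lt_abs_sub_of_above_of_below (hf : IsEquivWitness Δ Λ f) {x y a b ε : ℝ} (ha : a ∈ Δ)
    (hb : b ∈ Δ) (hε : ε ∈ Δ) (hfε : f ε + |f x - f y| ≤ f x + f y) (hεab : ε ≤ a + b)
    (habove : f x + f y < f a) (hbelow : f b < |f x - f y|) : ε < |a - b| := by
  by_contra! h
  have := ((hf.triangle_iff ha hb hε).1 ⟨h, hεab⟩).1
  linarith [le_abs_self (f a - f b)]

theorem add_lt_map_iff_add_lt_map (hΔ : IsDVS Δ) (hΔ0 : sInf Δ = 0) (hf : IsEquivWitness Δ Λ f)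
    {x y z₁ z₂ : ℝ} (hx : x ∈ Δ) (hy : y ∈ Δ) (hz₁ : z₁ ∈ Δ) (hz₂ : z₂ ∈ Δ) (h12 : z₁ ≤ z₂)
    (hgap : ∀ w ∈ Δ, z₁ ≤ w → w ≤ z₂ → ¬(|x - y| ≤ w ∧ w ≤ x + y)) :
    f x + f y < f z₁ ↔ f x + f y < f z₂ := by
  rcases h12.eq_or_lt with rfl | h12
  · rfl
  have hpos := hΔ.1
  obtain ⟨ε, hε, hεlt⟩ : ∃ ε ∈ Δ, ε < min (min x y) z₁ :=
    exists_lt_of_csInf_lt ⟨x, hx⟩ <| hΔ0 ▸ lt_min (lt_min (hpos x hx) (hpos y hy)) (hpos z₁ hz₁)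
  simp only [lt_min_iff] at hεlt
  obtain ⟨⟨hεx, hεy⟩, hεz₁⟩ := hεlt
  have hε0 := hpos ε hε
  have hfε := hf.map_add_abs_sub_le hx hy hε hε0.le hεx.le hεy.le
  have hnear : ∀ a ∈ Δ, ∀ b ∈ Δ, z₁ ≤ a → a ≤ z₂ → z₁ ≤ b → b ≤ z₂ → |a - b| ≤ ε →
      (f x + f y < f a ↔ f x + f y < f b) := by
    have hone_side : ∀ a ∈ Δ, ∀ b ∈ Δ, z₁ ≤ b → b ≤ z₂ → z₁ ≤ a → |a - b| ≤ ε →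
        f x + f y < f a → f x + f y < f b := by
      intro a ha b hb hb₁ hb₂ ha₁ hab hA
      by_contra hB
      have hbelow := (hf.above_or_below hx hy hb (hgap b hb hb₁ hb₂)).resolve_right hB
      exact (hf.lt_abs_sub_of_above_of_below ha hb hε hfε (by linarith [hpos b hb]) hA
        hbelow).not_ge hab
    intro a ha b hb ha₁ ha₂ hb₁ hb₂ hab
    exact ⟨hone_side a ha b hb hb₁ hb₂ ha₁ hab,
      hone_side b hb a ha ha₁ ha₂ hb₁ (abs_sub_comm a b ▸ hab)⟩
  obtain ⟨c, ⟨hc, hc₁, hside⟩, hc₂, hcε⟩ :=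
    exists_lt_le_add_of_forall_add (P := fun c ↦ c ∈ Δ ∧ z₁ ≤ c ∧
      (f x + f y < f z₁ ↔ f x + f y < f c)) hε0 ⟨hz₁, le_rfl, Iff.rfl⟩ h12
      (fun c ⟨hc, hc₁, hside⟩ hcε ↦ by
        have hcε' : c + ε ∈ Δ := hΔ.add_mem hc hε hz₂ hcε.le
        refine ⟨hcε', by linarith, hside.trans ?_⟩
        exact hnear c hc _ hcε' hc₁ (by linarith) (by linarith) hcε.le (by simp [abs_of_pos hε0]))
  refine hside.trans (hnear c hc z₂ hz₂ hc₁ hc₂.le (by linarith) le_rfl ?_)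
  rw [abs_sub_comm, abs_of_pos (by linarith)]
  linarith

theorem forall_above_or_forall_below (hΔ : IsDVS Δ) (hΔ0 : sInf Δ = 0)
    (hf : IsEquivWitness Δ Λ f) {x y : ℝ} (hx : x ∈ Δ) (hy : y ∈ Δ) {p : ℝ → Prop}
    (hgap : ∀ z₁ z₂, p z₁ → p z₂ → ∀ w ∈ Δ, z₁ ≤ w → w ≤ z₂ → ¬(|x - y| ≤ w ∧ w ≤ x + y)) :
    (∀ z ∈ Δ, p z → f x + f y < f z) ∨ (∀ z ∈ Δ, p z → f z < |f x - f y|) := by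
  by_cases habove : ∀ z ∈ Δ, p z → f x + f y < f z
  · exact .inl habove
  push Not at habove
  obtain ⟨z₀, hz₀, hpz₀, hz₀_not⟩ := habove
  refine .inr fun z hz hpz ↦
    (hf.above_or_below hx hy hz (hgap z z hpz hpz z hz le_rfl le_rfl)).resolve_right ?_
  rcases le_total z₀ z with h | h
  · rw [← hf.add_lt_map_iff_add_lt_map hΔ hΔ0 hx hy hz₀ hz h (hgap _ _ hpz₀ hpz)]
    exact hz₀_not.not_gt
  · rw [hf.add_lt_map_iff_add_lt_map hΔ hΔ0 hx hy hz hz₀ h (hgap _ _ hpz hpz₀)]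
    exact hz₀_not.not_gt

end IsEquivWitness

theorem witness_dichotomy_general (Δ Λ : Set ℝ) (hΔ : IsDVS Δ)
    (hΔ0 : sInf Δ = 0) (f : ℝ → ℝ) (hf : IsEquivWitness Δ Λ f)
    (x : ℝ) (hx : x ∈ Δ) (y : ℝ) (hy : y ∈ Δ) :
    ((∀ z ∈ Δ, x + y < z → f x + f y < f z) ∨
      (∀ z ∈ Δ, x + y < z → f z < |f x - f y|)) ∧
    ((∀ z ∈ Δ, z < |x - y| → f x + f y < f z) ∨
      (∀ z ∈ Δ, z < |x - y| → f z < |f x - f y|)) :=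
  ⟨hf.forall_above_or_forall_below hΔ hΔ0 hx hy fun _ _ h₁ _ _ _ hw _ hband ↦
      (h₁.trans_le hw).not_ge hband.2,
    hf.forall_above_or_forall_below hΔ hΔ0 hx hy fun _ _ _ h₂ _ _ _ hw hband ↦
      (hw.trans_lt h₂).not_ge hband.1⟩

/-- For a witness of equivalence `f` and `x, y ∈ Δ`: on the set of `z ∈ Δ` with
`z > x + y`, either `f` is everywhere above `f x + f y` or everywhere below
`|f x - f y|`; and likewise on the set of `z ∈ Δ` with `z < |x - y|`. -/
theorem witness_dichotomy (Δ Λ : Set ℝ) (hΔ : IsDVS Δ) (hΛ : IsDVS Λ)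
    (hΔ0 : sInf Δ = 0) (f : ℝ → ℝ) (hf : IsEquivWitness Δ Λ f)
    (x : ℝ) (hx : x ∈ Δ) (y : ℝ) (hy : y ∈ Δ) :
    ((∀ z ∈ Δ, x + y < z → f x + f y < f z) ∨
      (∀ z ∈ Δ, x + y < z → f z < |f x - f y|)) ∧
    ((∀ z ∈ Δ, z < |x - y| → f x + f y < f z) ∨
      (∀ z ∈ Δ, z < |x - y| → f z < |f x - f y|)) :=
  witness_dichotomy_general Δ Λ hΔ hΔ0 f hf x hx y hy
end

section
/- Let Δ and Λ be distance value sets with inf Δ = 0, and let f : Δ → Λ be a witness of their equivalence. Then for all x, t ∈ Δ, f(x)/x = f(t)/t; equivalently, there is a positive real number α such that f(x) = α·x for all x ∈ Δ. -/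
theorem IsDVS.add_mem_of_le {Δ : Set ℝ} (hΔ : IsDVS Δ) {x y z : ℝ} (hx : x ∈ Δ) (hy : y ∈ Δ)
    (hz : z ∈ Δ) (h : x + y ≤ z) : x + y ∈ Δ := by
  by_cases hb : BddAbove Δ
  · simpa [min_eq_left (h.trans (le_csSup hb hz))] using (hΔ.2 x hx y hy).1 hb
  · exact (hΔ.2 x hx y hy).2 hb

namespace IsEquivWitness

variable {Δ Λ : Set ℝ} {f : ℝ → ℝ}

theorem two_mul_lt_s10 (hΛ : IsDVS Λ) (hf : IsEquivWitness Δ Λ f) {u v : ℝ} (hu : u ∈ Δ)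
    (hv : v ∈ Δ) (h : 2 * v < u) : 2 * f v < f u := by
  by_contra! hle
  have hfu := hf.1.1 hu
  have hfv := hf.1.1 hv
  have hΛtri : IsTriangle Λ (f v) (f v) (f u) :=
    ⟨hfv, hfv, hfu, by simpa using (hΛ.1 _ hfu).le, by linarith⟩
  have := ((hf.2 v hv v hv u hu).2 hΛtri).2.2.2.2
  linarith

theorem exists_lt_and_map_lt (hΔ : IsDVS Δ) (hΛ : IsDVS Λ) (hf : IsEquivWitness Δ Λ f)
    (hΔsmall : ∀ δ > 0, ∃ ε ∈ Δ, ε < δ) {δ : ℝ} (hδ : 0 < δ) :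
    ∃ ε ∈ Δ, ε < δ ∧ f ε < δ := by
  by_contra! hbig
  set S := f '' {ε ∈ Δ | ε < δ}
  have hS : S.Nonempty := by
    obtain ⟨ε, hε, hεδ⟩ := hΔsmall δ hδ
    exact ⟨f ε, ε, ⟨hε, hεδ⟩, rfl⟩
  have hlow : δ ∈ lowerBounds S := by
    rintro _ ⟨ε, ⟨hε, hεδ⟩, rfl⟩
    exact hbig ε hε hεδ
  have hδS : δ ≤ sInf S := le_csInf hS hlow
  -- an element of `S` below `2 inf S`, halved, would give an element of `S` below `inf S`
  obtain ⟨_, ⟨u, ⟨hu, huδ⟩, rfl⟩, hfu⟩ :=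
    exists_lt_of_csInf_lt hS (by linarith : sInf S < 2 * sInf S)
  obtain ⟨v, hv, hvu⟩ := hΔsmall (u / 2) (by linarith [hΔ.1 u hu])
  have hfvu := hf.two_mul_lt_s10 hΛ hu hv (by linarith)
  have hSv : sInf S ≤ f v := csInf_le ⟨δ, hlow⟩ ⟨v, ⟨hv, by linarith⟩, rfl⟩
  linarith

variable (hΔ : IsDVS Δ) (hf : IsEquivWitness Δ Λ f)
  (hsmall : ∀ δ > 0, ∃ ε ∈ Δ, ε < δ ∧ f ε < δ)
include hΔ hf hsmall

theorem map_add_eq_add_or_abs_sub {a b x : ℝ} (ha : a ∈ Δ) (hb : b ∈ Δ) (hx : x ∈ Δ)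
    (hab : a + b < x) : f (a + b) = f a + f b ∨ f (a + b) = |f a - f b| := by
  have ha0 := hΔ.1 a ha
  have hb0 := hΔ.1 b hb
  have hc : a + b ∈ Δ := hΔ.add_mem_of_le ha hb hx hab.le
  obtain ⟨-, -, -, hlow, hupp⟩ := (hf.2 a ha b hb _ hc).1
    ⟨ha, hb, hc, abs_le.2 ⟨by linarith, by linarith⟩, le_rfl⟩
  by_contra! hne
  have hupp' : f (a + b) < f a + f b := lt_of_le_of_ne hupp hne.1
  have hlow' : |f a - f b| < f (a + b) := lt_of_le_of_ne hlow (Ne.symm hne.2)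
  obtain ⟨η, hη, hηδ, hfηδ⟩ := hsmall _
    (lt_min (sub_pos.2 hab) (lt_min (sub_pos.2 hupp') (sub_pos.2 hlow')))
  simp only [lt_min_iff] at hηδ hfηδ
  have hη0 := hΔ.1 η hη
  have hcη : a + b + η ∈ Δ := hΔ.add_mem_of_le hc hη hx (by linarith)
  obtain ⟨-, -, -, hlowη, huppη⟩ := (hf.2 _ hc _ hη _ hcη).1
    ⟨hc, hη, hcη, abs_le.2 ⟨by linarith, by linarith⟩, le_rfl⟩
  have hΛtri : IsTriangle Λ (f a) (f b) (f (a + b + η)) :=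
    ⟨hf.1.1 ha, hf.1.1 hb, hf.1.1 hcη,
      by linarith [le_abs_self (f (a + b) - f η)], by linarith⟩
  have := ((hf.2 a ha b hb _ hcη).2 hΛtri).2.2.2.2
  linarith

theorem map_nat_mul (hΛ : IsDVS Λ) {ε x : ℝ} (hε : ε ∈ Δ) (hx : x ∈ Δ) (n : ℕ) (hn : 1 ≤ n)
    (hnx : n * ε < x) : (n : ℝ) * ε ∈ Δ ∧ f (n * ε) = n * f ε := by
  induction n using Nat.strong_induction_on with | _ n ih =>
  obtain rfl | ⟨k, rfl⟩ : n = 1 ∨ ∃ k, n = k + 2 := by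
    rcases n with _ | _ | k <;> simp_all
  · simpa using hε
  have hε0 := hΔ.1 ε hε
  have hsum : ((k + 2 : ℕ) : ℝ) * ε = (k + 1 : ℕ) * ε + ε := by push_cast; ring
  rw [hsum] at hnx ⊢
  obtain ⟨hk1, hfk1⟩ := ih (k + 1) (by omega) (by omega) (by linarith)
  have hk2 := hΔ.add_mem_of_le hk1 hε hx hnx.le
  refine ⟨hk2, ?_⟩
  rcases hf.map_add_eq_add_or_abs_sub hΔ hsmall hk1 hε hx hnx with h | h
  · rw [h, hfk1]
    push_cast
    ring
  exfalso
  have hfε0 := hΛ.1 _ (hf.1.1 hε)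
  have hk' : f ((k + 1 : ℕ) * ε + ε) = k * f ε := by
    rw [h, hfk1, abs_of_nonneg (by push_cast; nlinarith)]
    push_cast
    ring
  -- the other degenerate value `k f ε` is `0` or already taken by `k ε`
  rcases Nat.eq_zero_or_pos k with rfl | hk
  · have := hΛ.1 _ (hf.1.1 hk2)
    rw [hk'] at this
    simp at this
  obtain ⟨hk0, hfk0⟩ := ih k (by omega) hk (by push_cast at hnx ⊢; linarith)
  have := hf.1.2.1 hk0 hk2 (hfk0.trans hk'.symm)
  push_cast at this
  linarith

theorem abs_div_sub_div_le (hΛ : IsDVS Λ) {ε x : ℝ} (hε : ε ∈ Δ) (hx : x ∈ Δ) (hεx : ε < x) :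
    |f x / x - f ε / ε| ≤ 2 * f ε / x := by
  have hε0 := hΔ.1 ε hε
  have hx0 := hΔ.1 x hx
  have hfε0 := hΛ.1 _ (hf.1.1 hε)
  have hceil : 1 < ⌈x / ε⌉₊ := Nat.lt_ceil.2 (by exact_mod_cast (one_lt_div hε0).2 hεx)
  obtain ⟨M, hM⟩ : ∃ M : ℕ, ⌈x / ε⌉₊ = M + 1 := Nat.exists_eq_add_one.2 (by omega)
  have hM1 : 1 ≤ M := by omega
  have hMx : M * ε < x := by
    have := Nat.ceil_lt_add_one (div_pos hx0 hε0).le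
    rw [hM, Nat.cast_add_one, add_lt_add_iff_right, lt_div_iff₀ hε0] at this
    exact this
  have hxM : x ≤ (M + 1) * ε := by
    have := Nat.le_ceil (x / ε)
    rwa [hM, Nat.cast_add_one, div_le_iff₀ hε0] at this
  obtain ⟨hMΔ, hfM⟩ := hf.map_nat_mul hΔ hsmall hΛ hε hx M hM1 hMx
  obtain ⟨-, -, -, hlow, hupp⟩ := (hf.2 _ hMΔ _ hε _ hx).1
    ⟨hMΔ, hε, hx, abs_le.2 ⟨by nlinarith, by linarith⟩, by linarith⟩
  rw [hfM] at hlow hupp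
  have hfx : |f x - M * f ε| ≤ f ε :=
    abs_le.2 ⟨by linarith [le_abs_self (M * f ε - f ε)], by linarith⟩
  have hxε : |x - M * ε| ≤ ε := abs_le.2 ⟨by linarith, by linarith⟩
  have hsplit : f x / x - f ε / ε = ((f x - M * f ε) * ε - f ε * (x - M * ε)) / (x * ε) := by
    field_simp
    ring
  rw [hsplit, abs_div, abs_of_pos (mul_pos hx0 hε0), div_le_div_iff₀ (by positivity) hx0]
  calc |(f x - M * f ε) * ε - f ε * (x - M * ε)| * x
      ≤ (|f x - M * f ε| * ε + f ε * |x - M * ε|) * x := by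
        gcongr
        refine (abs_sub _ _).trans ?_
        rw [abs_mul, abs_mul, abs_of_pos hε0, abs_of_pos hfε0]
    _ ≤ (f ε * ε + f ε * ε) * x := by gcongr
    _ = 2 * f ε * (x * ε) := by ring

end IsEquivWitness

/-- A witness of equivalence of distance value sets (the first having infimum
zero) is multiplication by a single positive real number. -/
theorem witness_linear (Δ Λ : Set ℝ) (hΔ : IsDVS Δ) (hΛ : IsDVS Λ)
    (hΔ0 : sInf Δ = 0) (f : ℝ → ℝ) (hf : IsEquivWitness Δ Λ f) :
    (∀ x ∈ Δ, ∀ t ∈ Δ, f x / x = f t / t) ∧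
    ∃ α : ℝ, 0 < α ∧ ∀ x ∈ Δ, f x = α * x := by
  rcases Δ.eq_empty_or_nonempty with rfl | hne
  · exact ⟨by simp, 1, one_pos, by simp⟩
  have hsmall : ∀ δ > 0, ∃ ε ∈ Δ, ε < δ ∧ f ε < δ := fun δ hδ =>
    hf.exists_lt_and_map_lt hΔ hΛ (fun δ hδ => exists_lt_of_csInf_lt hne (hΔ0 ▸ hδ)) hδ
  have hratio : ∀ x ∈ Δ, ∀ t ∈ Δ, f x / x = f t / t := by
    intro x hx t ht
    have hx0 := hΔ.1 x hx
    have ht0 := hΔ.1 t ht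
    refine eq_of_forall_dist_le fun δ hδ => ?_
    obtain ⟨ε, hε, hεδ, hfεδ⟩ := hsmall (min (min x t) (min (δ * x / 4) (δ * t / 4)))
      (by positivity)
    simp only [lt_min_iff] at hεδ hfεδ
    obtain ⟨⟨hεx, hεt⟩, -⟩ := hεδ
    obtain ⟨-, hfεx, hfεt⟩ := hfεδ
    calc dist (f x / x) (f t / t) ≤ |f x / x - f ε / ε| + |f t / t - f ε / ε| :=
          dist_triangle_right _ _ _
      _ ≤ 2 * f ε / x + 2 * f ε / t :=
          add_le_add (hf.abs_div_sub_div_le hΔ hsmall hΛ hε hx hεx)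
            (hf.abs_div_sub_div_le hΔ hsmall hΛ hε ht hεt)
      _ ≤ δ / 2 + δ / 2 :=
          add_le_add (by rw [div_le_iff₀ hx0]; linarith) (by rw [div_le_iff₀ ht0]; linarith)
      _ = δ := add_halves δ
  obtain ⟨t, ht⟩ := hne
  refine ⟨hratio, f t / t, div_pos (hΛ.1 _ (hf.1.1 ht)) (hΔ.1 t ht), fun x hx => ?_⟩
  rw [← hratio x hx t ht, div_mul_cancel₀ _ (hΔ.1 x hx).ne']
end

section
/- Let β be a positive irrational number and let a, b, c, d be rationals with ad − bc ≠ 0 and cβ + d > 0, and suppose α = (aβ + b)/(cβ + d) is positive. Then α is irrational and (cβ + d)·Δ_α = Δ_β, i.e., the map t ↦ (cβ + d)·t is a bijection from Δ_α onto Δ_β (and hence, being multiplication by a positive constant, it preserves triangles, so it witnesses the equivalence of Δ_α and Δ_β). -/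
/-
The map `t ↦ (cβ + d) t` sends `pα + q` to `p (aβ + b) + q (cβ + d)`, so on coefficient
vectors it acts by the rational matrix `[[a, b], [c, d]]`; since this matrix is invertible,
the map carries `ℚα + ℚ` onto `ℚβ + ℚ`, and being multiplication by a positive constant it
preserves positivity and the triangle inequalities.
-/

theorem irrational_div_of_det_ne_zero {β : ℝ} (hβ : Irrational β) {a b c d : ℚ}
    (hdet : a * d - b * c ≠ 0) (hden : (c : ℝ) * β + d ≠ 0) :
    Irrational (((a : ℝ) * β + b) / ((c : ℝ) * β + d)) := by
  rintro ⟨r, hr⟩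
  have hlin : ((a : ℝ) - r * c) * β = r * d - b := by
    linear_combination -(eq_div_iff hden).mp hr
  by_cases hac : (a : ℝ) - r * c = 0
  -- then `(a, b) = r (c, d)`
  · refine hdet (Rat.cast_injective (α := ℝ) ?_)
    push_cast
    linear_combination (d + c * β) * hac - c * hlin
  · exact hβ ⟨(r * d - b) / (a - r * c), by
      push_cast
      rw [div_eq_iff hac]
      linear_combination -hlin⟩

theorem exists_rat_comb_eq_of_det_ne_zero {a b c d : ℚ} (hdet : a * d - b * c ≠ 0)
    (β : ℝ) (p q : ℚ) :
    ∃ p' q' : ℚ, (p : ℝ) * β + q = p' * ((a : ℝ) * β + b) + q' * ((c : ℝ) * β + d) := by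
  refine ⟨(p * d - q * c) * (a * d - b * c)⁻¹, (q * a - p * b) * (a * d - b * c)⁻¹, ?_⟩
  have hdetR : (a : ℝ) * d - b * c ≠ 0 := by exact_mod_cast hdet
  push_cast
  linear_combination (-(p * β + q)) * mul_inv_cancel₀ hdetR

theorem image_mul_Dset {β : ℝ} {a b c d : ℚ} (hdet : a * d - b * c ≠ 0)
    (hden : 0 < (c : ℝ) * β + d) :
    (fun t => ((c : ℝ) * β + d) * t) '' Dset (((a : ℝ) * β + b) / ((c : ℝ) * β + d)) =
      Dset β := by
  ext x
  constructor
  · rintro ⟨t, ⟨⟨p, q, rfl⟩, ht⟩, rfl⟩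
    refine ⟨⟨p * a + q * c, p * b + q * d, ?_⟩, mul_pos hden ht⟩
    push_cast
    field_simp
    ring
  · rintro ⟨⟨p, q, rfl⟩, hx⟩
    obtain ⟨p', q', hpq⟩ := exists_rat_comb_eq_of_det_ne_zero hdet β p q
    have hD : ((c : ℝ) * β + d) * (p' * (((a : ℝ) * β + b) / ((c : ℝ) * β + d)) + q') =
        p * β + q := by
      rw [hpq]
      field_simp
    exact ⟨_, ⟨⟨p', q', rfl⟩, pos_of_mul_pos_right (hD ▸ hx) hden.le⟩, hD⟩

theorem isEquivWitness_mul_of_bijOn {Δ Λ : Set ℝ} {k : ℝ} (hk : 0 < k)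
    (h : Set.BijOn (fun t => k * t) Δ Λ) : IsEquivWitness Δ Λ (fun t => k * t) := by
  refine ⟨h, fun x hx y hy z hz => ?_⟩
  have hsub : |k * x - k * y| ≤ k * z ↔ |x - y| ≤ z := by
    rw [← mul_sub, abs_mul, abs_of_pos hk, mul_le_mul_iff_right₀ hk]
  have hadd : k * z ≤ k * x + k * y ↔ z ≤ x + y := by
    rw [← mul_add, mul_le_mul_iff_right₀ hk]
  simp only [IsTriangle, hx, hy, hz, h.mapsTo hx, h.mapsTo hy, h.mapsTo hz, hsub, hadd, true_and]

theorem dset_scaling_bijection_general (β : ℝ) (hβirr : Irrational β)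
    (a b c d : ℚ) (hdet : a * d - b * c ≠ 0)
    (hden : 0 < (c : ℝ) * β + d)
    (α : ℝ) (hα : α = ((a : ℝ) * β + b) / ((c : ℝ) * β + d)) :
    Irrational α ∧
    Set.BijOn (fun t => ((c : ℝ) * β + d) * t) (Dset α) (Dset β) ∧
    IsEquivWitness (Dset α) (Dset β) (fun t => ((c : ℝ) * β + d) * t) := by
  subst hα
  have hbij : Set.BijOn (fun t => ((c : ℝ) * β + d) * t)
      (Dset (((a : ℝ) * β + b) / ((c : ℝ) * β + d))) (Dset β) :=
    image_mul_Dset hdet hden ▸ (mul_right_injective₀ hden.ne').injOn.bijOn_image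
  exact ⟨irrational_div_of_det_ne_zero hβirr hdet hden.ne', hbij,
    isEquivWitness_mul_of_bijOn hden hbij⟩

/-- If `β` is a positive irrational, `a, b, c, d ∈ ℚ` with `ad - bc ≠ 0` and
`cβ + d > 0`, and `α = (aβ + b)/(cβ + d)` is positive, then `α` is irrational
and `t ↦ (cβ + d)·t` is a bijection of `Δ_α` onto `Δ_β` witnessing the
equivalence of `Δ_α` and `Δ_β`. -/
theorem dset_scaling_bijection (β : ℝ) (hβ : 0 < β) (hβirr : Irrational β)
    (a b c d : ℚ) (hdet : a * d - b * c ≠ 0)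
    (hden : 0 < (c : ℝ) * β + d)
    (α : ℝ) (hα : α = ((a : ℝ) * β + b) / ((c : ℝ) * β + d)) (hαpos : 0 < α) :
    Irrational α ∧
    Set.BijOn (fun t => ((c : ℝ) * β + d) * t) (Dset α) (Dset β) ∧
    IsEquivWitness (Dset α) (Dset β) (fun t => ((c : ℝ) * β + d) * t) :=
  dset_scaling_bijection_general β hβirr a b c d hdet hden α hα
end

section
/- Let Δ be a nonempty distance value set. Then inf Δ = 0 if and only if Δ is dense in the open interval (0, sup Δ), i.e., for all real numbers a, b with 0 < a < b and a < sup Δ (interpreting sup Δ = +∞ when Δ is unbounded, and requiring b ≤ sup Δ when Δ is bounded), there exists x ∈ Δ with a < x < b. -/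
/-! If `inf Δ = 0`, pick `d ∈ Δ` shorter than `b - a`; the multiples of `d` up to `sup Δ` all lie
in `Δ`, and one of them falls in `(a, b)`. Conversely, if `inf Δ > 0`, density in
`(inf Δ / 2, inf Δ)` would produce an element below the infimum. -/

theorem exists_nat_mul_mem_Ioc {K : Type*} [Field K] [LinearOrder K] [IsStrictOrderedRing K]
    [FloorSemiring K] {a d : K} (ha : 0 ≤ a) (hd : 0 < d) :
    ∃ n : ℕ, a < n * d ∧ n * d ≤ a + d := by
  refine ⟨⌊a / d⌋₊ + 1, ?_, ?_⟩
  · rw [← div_lt_iff₀ hd]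
    exact_mod_cast Nat.lt_floor_add_one (a / d)
  · rw [Nat.cast_add_one, add_one_mul, add_le_add_iff_right, ← le_div_iff₀ hd]
    exact Nat.floor_le (div_nonneg ha hd.le)

namespace IsDVS

variable {Δ : Set ℝ}

theorem sInf_nonneg (hΔ : IsDVS Δ) : 0 ≤ sInf Δ :=
  Real.sInf_nonneg fun x hx => (hΔ.1 x hx).le

theorem bddBelow (hΔ : IsDVS Δ) : BddBelow Δ :=
  ⟨0, fun x hx => (hΔ.1 x hx).le⟩

theorem add_mem_s12 (hΔ : IsDVS Δ) {x y : ℝ} (hx : x ∈ Δ) (hy : y ∈ Δ)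
    (hsup : BddAbove Δ → x + y ≤ sSup Δ) : x + y ∈ Δ := by
  by_cases hB : BddAbove Δ
  · simpa only [min_eq_left (hsup hB)] using (hΔ.2 x hx y hy).1 hB
  · exact (hΔ.2 x hx y hy).2 hB

theorem natCast_mul_mem (hΔ : IsDVS Δ) {d : ℝ} (hd : d ∈ Δ) {n : ℕ} (hn : 0 < n)
    (hsup : BddAbove Δ → n * d ≤ sSup Δ) : (n : ℝ) * d ∈ Δ := by
  induction n, hn using Nat.le_induction with
  | base => simpa using hd
  | succ n hn ih =>
    rw [Nat.cast_add_one, add_one_mul] at hsup ⊢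
    have hd_pos := hΔ.1 d hd
    exact hΔ.add_mem_s12 (ih fun hB => by linarith [hsup hB]) hd hsup

theorem exists_mem_Ioo_of_sInf_eq_zero (hΔ : IsDVS Δ) (hne : Δ.Nonempty) (hinf : sInf Δ = 0)
    {a b : ℝ} (ha : 0 < a) (hab : a < b) (hb : BddAbove Δ → b ≤ sSup Δ) :
    ∃ x ∈ Δ, a < x ∧ x < b := by
  obtain ⟨d, hdΔ, hd_lt⟩ := Real.lt_sInf_add_pos hne (sub_pos.2 hab)
  rw [hinf, zero_add] at hd_lt
  obtain ⟨n, han, hnb⟩ := exists_nat_mul_mem_Ioc ha.le (hΔ.1 d hdΔ)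
  have hnb' : n * d < b := by linarith
  have hn : 0 < n := by exact_mod_cast pos_of_mul_pos_left (ha.trans han) (hΔ.1 d hdΔ).le
  exact ⟨n * d, hΔ.natCast_mul_mem hdΔ hn fun hB => hnb'.le.trans (hb hB), han, hnb'⟩

end IsDVS

/-- A nonempty distance value set has infimum `0` iff it is dense in
`(0, sup Δ)` (where `sup Δ = +∞` when `Δ` is unbounded, in which case the
constraints `a < sup Δ` and `b ≤ sup Δ` are vacuous). -/
theorem dvs_inf_zero_iff_dense (Δ : Set ℝ) (hΔ : IsDVS Δ) (hne : Δ.Nonempty) :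
    sInf Δ = 0 ↔
      ∀ a b : ℝ, 0 < a → a < b →
        (BddAbove Δ → a < sSup Δ ∧ b ≤ sSup Δ) →
        ∃ x ∈ Δ, a < x ∧ x < b := by
  refine ⟨fun hinf a b ha hab hsup =>
    hΔ.exists_mem_Ioo_of_sInf_eq_zero hne hinf ha hab fun hB => (hsup hB).2, fun hdense => ?_⟩
  refine le_antisymm ?_ hΔ.sInf_nonneg
  by_contra! hpos
  obtain ⟨y, hy⟩ := hne
  have hinf_le : sInf Δ ≤ y := csInf_le hΔ.bddBelow hy
  obtain ⟨x, hx, -, hx_lt⟩ := hdense (sInf Δ / 2) (sInf Δ) (half_pos hpos) (half_lt_self hpos)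
    fun hB => ⟨by linarith [le_csSup hB hy], hinf_le.trans (le_csSup hB hy)⟩
  exact (csInf_le hΔ.bddBelow hx).not_gt hx_lt
end

section
/- Let Δ be a nonempty distance value set. The class of finite Δ-metric spaces has the amalgamation property: if A, B, C are finite Δ-metric spaces with A nonempty, and f : A → B and g : A → C are isometric embeddings, then there exist a finite Δ-metric space D and isometric embeddings r : B → D and s : C → D such that r ∘ f = s ∘ g. -/
open Metric

@[reducible]
def MetricSpace.ofMetricPreserving {X : Type*} [MetricSpace X] (φ : ℝ → ℝ) (hφ0 : φ 0 = 0)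
    (hφpos : ∀ t, 0 < t → 0 < φ t) (hφmono : Monotone φ)
    (hφadd : ∀ s t, 0 ≤ s → 0 ≤ t → φ (s + t) ≤ φ s + φ t) :
    MetricSpace X where
  dist x y := φ (dist x y)
  dist_self x := by rw [dist_self, hφ0]
  dist_comm x y := by rw [dist_comm]
  dist_triangle x y z :=
    (hφmono (dist_triangle x y z)).trans (hφadd _ _ dist_nonneg dist_nonneg)
  eq_of_dist_eq_zero {x y} h := by
    by_contra hxy
    exact (hφpos _ (dist_pos.2 hxy)).ne' h

section DistCap

variable {Δ : Set ℝ} {s t : ℝ}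

open Classical in
/-- `min t (sup Δ)`, where `sup Δ = ∞` for unbounded `Δ`. -/
noncomputable def distCap (Δ : Set ℝ) (t : ℝ) : ℝ :=
  if BddAbove Δ then min t (sSup Δ) else t

lemma distCap_monotone (Δ : Set ℝ) : Monotone (distCap Δ) := fun s t hst => by
  unfold distCap
  split_ifs
  · exact min_le_min_right _ hst
  · exact hst

lemma distCap_add_le (hΔ : ∀ x ∈ Δ, 0 < x) (hs : 0 ≤ s) (ht : 0 ≤ t) :
    distCap Δ (s + t) ≤ distCap Δ s + distCap Δ t := by
  unfold distCap
  split_ifs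
  · have hM : 0 ≤ sSup Δ := Real.sSup_nonneg fun x hx => (hΔ x hx).le
    rcases le_total s (sSup Δ) with hsM | hsM <;> rcases le_total t (sSup Δ) with htM | htM <;>
      simp only [min_eq_left, min_eq_right, hsM, htM] <;>
      linarith [min_le_left (s + t) (sSup Δ), min_le_right (s + t) (sSup Δ)]
  · exact le_rfl

lemma distCap_pos (hΔ : ∀ x ∈ Δ, 0 < x) (hne : Δ.Nonempty) (ht : 0 < t) :
    0 < distCap Δ t := by
  unfold distCap
  split_ifs with hbdd
  · obtain ⟨x, hx⟩ := hne
    exact lt_min ht ((hΔ x hx).trans_le (le_csSup hbdd hx))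
  · exact ht

lemma distCap_eq_self (hΔ : ∀ x ∈ Δ, 0 < x) (ht : t ∈ insert 0 Δ) : distCap Δ t = t := by
  unfold distCap
  split_ifs with hbdd
  · refine min_eq_left ?_
    rcases ht with rfl | ht
    · exact Real.sSup_nonneg fun x hx => (hΔ x hx).le
    · exact le_csSup hbdd ht
  · rfl

lemma IsDVS.distCap_add_mem (hΔ : IsDVS Δ) (hs : s ∈ insert 0 Δ) (ht : t ∈ insert 0 Δ) :
    distCap Δ (s + t) ∈ insert 0 Δ := by
  rcases hs with rfl | hs
  · rwa [zero_add, distCap_eq_self hΔ.1 ht]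
  rcases ht with rfl | ht
  · rw [add_zero, distCap_eq_self hΔ.1 (.inr hs)]
    exact .inr hs
  refine .inr ?_
  unfold distCap
  split_ifs with hbdd
  · exact (hΔ.2 s hs t ht).1 hbdd
  · exact (hΔ.2 s hs t ht).2 hbdd

end DistCap

lemma dist_mem_insert_zero {X : Type*} [MetricSpace X] {Δ : Set ℝ}
    (hX : ∀ x y : X, x ≠ y → dist x y ∈ Δ) (x y : X) : dist x y ∈ insert 0 Δ := by
  rcases eq_or_ne x y with rfl | hxy
  · exact .inl (dist_self x)
  · exact .inr (hX x y hxy)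

namespace Metric

variable {A B C : Type*} [MetricSpace A] [MetricSpace B] [MetricSpace C] [Nonempty A]
  {f : A → B} {g : A → C} (hf : Isometry f) (hg : Isometry g)

theorem GlueSpace.cases {motive : GlueSpace hf hg → Prop} (x : GlueSpace hf hg)
    (inl : ∀ b, motive (toGlueL hf hg b)) (inr : ∀ c, motive (toGlueR hf hg c)) : motive x := by
  induction x using Quotient.inductionOn' with
  | h p => cases p with
    | inl b => exact inl b
    | inr c => exact inr c

instance [Finite B] [Finite C] : Finite (GlueSpace hf hg) :=
  Finite.of_surjective (Sum.elim (toGlueL hf hg) (toGlueR hf hg)) fun x =>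
    GlueSpace.cases hf hg (motive := fun x => ∃ p, Sum.elim _ _ p = x) x
      (fun b => ⟨.inl b, rfl⟩) (fun c => ⟨.inr c, rfl⟩)

theorem dist_toGlueL_toGlueR (b : B) (c : C) :
    dist (toGlueL hf hg b) (toGlueR hf hg c) = ⨅ a, dist b (f a) + dist c (g a) :=
  add_zero _

theorem exists_dist_toGlueL_toGlueR_eq [Finite A] (b : B) (c : C) :
    ∃ a, dist (toGlueL hf hg b) (toGlueR hf hg c) = dist b (f a) + dist c (g a) := by
  obtain ⟨a, ha⟩ := exists_eq_ciInf_of_finite (f := fun a => dist b (f a) + dist c (g a))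
  exact ⟨a, by rw [dist_toGlueL_toGlueR, ← ha]⟩

theorem _root_.IsDVS.distCap_dist_glueSpace_mem [Finite A] {Δ : Set ℝ} (hΔ : IsDVS Δ)
    (hB : ∀ x y : B, dist x y ∈ insert 0 Δ) (hC : ∀ x y : C, dist x y ∈ insert 0 Δ)
    (x y : GlueSpace hf hg) : distCap Δ (dist x y) ∈ insert 0 Δ := by
  have mixed : ∀ b c, distCap Δ (dist (toGlueL hf hg b) (toGlueR hf hg c)) ∈ insert 0 Δ :=
    fun b c => by
      obtain ⟨a, ha⟩ := exists_dist_toGlueL_toGlueR_eq hf hg b c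
      rw [ha]
      exact hΔ.distCap_add_mem (hB _ _) (hC _ _)
  induction x using GlueSpace.cases with
  | inl b =>
    induction y using GlueSpace.cases with
    | inl b' => rw [(toGlueL_isometry hf hg).dist_eq, distCap_eq_self hΔ.1 (hB _ _)]; exact hB _ _
    | inr c => exact mixed b c
  | inr c =>
    induction y using GlueSpace.cases with
    | inl b => rw [dist_comm]; exact mixed b c
    | inr c' => rw [(toGlueR_isometry hf hg).dist_eq, distCap_eq_self hΔ.1 (hC _ _)]; exact hC _ _

end Metric

theorem dvs_metric_amalgamation_general (Δ : Set ℝ) (hΔ : IsDVS Δ) (hΔne : Δ.Nonempty)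
    (A B C : Type) [MetricSpace A] [MetricSpace B] [MetricSpace C]
    [Finite A] [Finite B] [Finite C] [Nonempty A]
    (hB : ∀ x y : B, x ≠ y → dist x y ∈ Δ)
    (hC : ∀ x y : C, x ≠ y → dist x y ∈ Δ)
    (f : A → B) (g : A → C)
    (hfiso : ∀ x y : A, dist (f x) (f y) = dist x y)
    (hgiso : ∀ x y : A, dist (g x) (g y) = dist x y) :
    ∃ (D : Type) (mD : MetricSpace D), Finite D ∧
      (∀ x y : D, x ≠ y → mD.dist x y ∈ Δ) ∧
      ∃ (r : B → D) (s : C → D),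
        Function.Injective r ∧ Function.Injective s ∧
        (∀ x y : B, mD.dist (r x) (r y) = dist x y) ∧
        (∀ x y : C, mD.dist (s x) (s y) = dist x y) ∧
        r ∘ f = s ∘ g := by
  have hf : Isometry f := .of_dist_eq hfiso
  have hg : Isometry g := .of_dist_eq hgiso
  have hr : ∀ x y : B, distCap Δ (dist (toGlueL hf hg x) (toGlueL hf hg y)) = dist x y :=
    fun x y => by
      rw [(toGlueL_isometry hf hg).dist_eq, distCap_eq_self hΔ.1 (dist_mem_insert_zero hB x y)]
  have hs : ∀ x y : C, distCap Δ (dist (toGlueR hf hg x) (toGlueR hf hg y)) = dist x y :=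
    fun x y => by
      rw [(toGlueR_isometry hf hg).dist_eq, distCap_eq_self hΔ.1 (dist_mem_insert_zero hC x y)]
  have hD : ∀ x y : GlueSpace hf hg, x ≠ y → distCap Δ (dist x y) ∈ Δ := fun x y hxy =>
    (hΔ.distCap_dist_glueSpace_mem hf hg (dist_mem_insert_zero hB) (dist_mem_insert_zero hC) x y
      ).resolve_left (distCap_pos hΔ.1 hΔne (dist_pos.2 hxy)).ne'
  refine ⟨GlueSpace hf hg, .ofMetricPreserving (distCap Δ) (distCap_eq_self hΔ.1 (.inl rfl))
    (fun _ => distCap_pos hΔ.1 hΔne) (distCap_monotone Δ) (fun _ _ => distCap_add_le hΔ.1),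
    inferInstance, hD, toGlueL hf hg, toGlueR hf hg, (toGlueL_isometry hf hg).injective,
    (toGlueR_isometry hf hg).injective, hr, hs, toGlue_commute hf hg⟩

/-- The class of finite `Δ`-metric spaces has the amalgamation property: any two
isometric embeddings `f : A → B`, `g : A → C` of a nonempty finite `Δ`-metric
space `A` into finite `Δ`-metric spaces `B`, `C` can be amalgamated over `A` by
isometric embeddings `r : B → D`, `s : C → D` into a finite `Δ`-metric space `D`
with `r ∘ f = s ∘ g`. -/
theorem dvs_metric_amalgamation (Δ : Set ℝ) (hΔ : IsDVS Δ) (hΔne : Δ.Nonempty)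
    (A B C : Type) [MetricSpace A] [MetricSpace B] [MetricSpace C]
    [Finite A] [Finite B] [Finite C] [Nonempty A]
    (hA : ∀ x y : A, x ≠ y → dist x y ∈ Δ)
    (hB : ∀ x y : B, x ≠ y → dist x y ∈ Δ)
    (hC : ∀ x y : C, x ≠ y → dist x y ∈ Δ)
    (f : A → B) (g : A → C)
    (hf : Function.Injective f) (hg : Function.Injective g)
    (hfiso : ∀ x y : A, dist (f x) (f y) = dist x y)
    (hgiso : ∀ x y : A, dist (g x) (g y) = dist x y) :
    ∃ (D : Type) (mD : MetricSpace D), Finite D ∧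
      (∀ x y : D, x ≠ y → mD.dist x y ∈ Δ) ∧
      ∃ (r : B → D) (s : C → D),
        Function.Injective r ∧ Function.Injective s ∧
        (∀ x y : B, mD.dist (r x) (r y) = dist x y) ∧
        (∀ x y : C, mD.dist (s x) (s y) = dist x y) ∧
        r ∘ f = s ∘ g :=
  dvs_metric_amalgamation_general Δ hΔ hΔne A B C hB hC f g hfiso hgiso
end
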